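/- Let M be a MAGNN with L layers (in particular, with continuous activation functions). Let P be a binary predicate, let D_0 be a dataset and a ∈ con(D_0) such that no fact of the form P(a,d) belongs to D_0, let E be a dataset with con(E) ∩ con(D_0) = ∅ and a ∉ con(E), let c_1,…,c_n ∈ con(E) with n ≥ 0, and let b, b_1, b_2, … be pairwise distinct constants none of which occurs in con(D_0) ∪ con(E) ∪ {a}. For each m ≥ 0 define D'_m = D_0 ∪ E ∪ { P(a,c_1),…,P(a,c_n) } ∪ { P(a,b_1),…,P(a,b_m) }. Then for every ℓ ∈ {0,…,L} and every component index i, lim_{m→∞} v^a_ℓ(D'_m)[i] = v^a_ℓ(D_0 ∪ {P(a,b)})[i], where v^a_ℓ(D) denotes the layer-ℓ vector that M assigns to a on input D. -/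

import Mathlib

open scoped BigOperators

namespace KG

/-- A fact over a signature with `δ` unary predicates (indexed by `Fin δ`) and
binary predicates indexed by `Col`; constants are natural numbers. -/
inductive Fact (δ : ℕ) (Col : Type) where
  | unary : Fin δ → ℕ → Fact δ Col
  | binary : Col → ℕ → ℕ → Fact δ Col
deriving DecidableEq

/-- A dataset is a finite set of facts. -/
abbrev Dataset (δ : ℕ) (Col : Type) [DecidableEq Col] := Finset (Fact δ Col)

variable {δ : ℕ} {Col : Type} [DecidableEq Col] [Fintype Col]

/-- The (finite) set of constants occurring in a dataset. -/
def conD (D : Dataset δ Col) : Finset ℕ :=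
  D.biUnion fun f =>
    match f with
    | .unary _ a => {a}
    | .binary _ a b => {a, b}

/-- The `P`-successors of `a` in `D`. -/
def nbrs (D : Dataset δ Col) (P : Col) (a : ℕ) : Finset ℕ :=
  (conD D).filter fun d => Fact.binary P a d ∈ D

/-- A mean-aggregation GNN with `L ≥ 1` layers, over the signature with `δ` unary
predicates and binary predicates `Col`.  `dims ℓ` is the dimension of the layer-`ℓ`
vectors, with `dims 0 = dims L = δ`; `A ℓ` and `B P ℓ` are the matrices and `bias ℓ`
the bias vector used to compute the layer-`(ℓ+1)` vectors; `act ℓ` is the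
(monotonically increasing, continuous, non-negatively valued) activation function
applied there, and `t` is the classification threshold. -/
structure GNN (δ : ℕ) (Col : Type) where
  L : ℕ
  hL : 1 ≤ L
  dims : ℕ → ℕ
  dims0 : dims 0 = δ
  dimsL : dims L = δ
  A : (ℓ : ℕ) → Matrix (Fin (dims (ℓ + 1))) (Fin (dims ℓ)) ℝ
  B : Col → (ℓ : ℕ) → Matrix (Fin (dims (ℓ + 1))) (Fin (dims ℓ)) ℝ
  bias : (ℓ : ℕ) → Fin (dims (ℓ + 1)) → ℝ
  act : ℕ → ℝ → ℝ
  act_mono : ∀ ℓ, Monotone (act ℓ)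
  act_cont : ∀ ℓ, Continuous (act ℓ)
  act_nonneg : ∀ ℓ x, 0 ≤ act ℓ x
  t : ℝ

/-- The layer-`ℓ` vector that the GNN `M` assigns to the constant `a` on input
dataset `D`.  The mean of an empty family is the zero vector (`0 / 0 = 0` in `ℝ`). -/
noncomputable def GNN.val (M : GNN δ Col) (D : Dataset δ Col) :
    (ℓ : ℕ) → ℕ → Fin (M.dims ℓ) → ℝ
  | 0, a, i => if Fact.unary (Fin.cast M.dims0 i) a ∈ D then (1 : ℝ) else 0
  | ℓ + 1, a, i =>
      M.act ℓ (M.bias ℓ i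
        + (M.A ℓ).mulVec (fun j => M.val D ℓ a j) i
        + ∑ P : Col, (M.B P ℓ).mulVec
            (fun j => (∑ d ∈ nbrs D P a, M.val D ℓ d j) / ((nbrs D P a).card : ℝ)) i)

/-- The dataset transformation induced by the GNN `M`:
`T_M(D) = { Uᵢ(a) : a ∈ con(D), v^a_L[i] ≥ t }`. -/
def GNN.T (M : GNN δ Col) (D : Dataset δ Col) : Set (Fact δ Col) :=
  { f | ∃ (A : Fin δ) (a : ℕ), f = Fact.unary A a ∧ a ∈ conD D ∧
      M.t ≤ M.val D M.L a (Fin.cast M.dimsL.symm A) }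

/-- A GNN is monotonic (is a MAGNN) if all matrix entries are non-negative. -/
def GNN.Monotonic (M : GNN δ Col) : Prop :=
  (∀ ℓ i j, 0 ≤ M.A ℓ i j) ∧ (∀ P ℓ i j, 0 ≤ M.B P ℓ i j)

/-- Concepts in the syntax `C ::= ⊤ | A | C ⊓ C' | C ⊔ C' | ≥ₙ P.C`
(`∃P.C` is `≥₁ P.C`); ELUQ concepts are those in which every `≥ₙ` has `n ≥ 1`. -/
inductive Concept (δ : ℕ) (Col : Type) where
  | top : Concept δ Col
  | atom : Fin δ → Concept δ Col
  | and : Concept δ Col → Concept δ Col → Concept δ Col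
  | or : Concept δ Col → Concept δ Col → Concept δ Col
  | atLeast : ℕ → Col → Concept δ Col → Concept δ Col
deriving DecidableEq

/-- A concept is a (well-formed) ELUQ concept when every `≥ₙ` has `n` a positive integer. -/
inductive ELUQ : Concept δ Col → Prop
  | top : ELUQ .top
  | atom (A : Fin δ) : ELUQ (.atom A)
  | and {C₁ C₂} : ELUQ C₁ → ELUQ C₂ → ELUQ (.and C₁ C₂)
  | or {C₁ C₂} : ELUQ C₁ → ELUQ C₂ → ELUQ (.or C₁ C₂)
  | atLeast {C} (n : ℕ) (P : Col) (hn : 1 ≤ n) : ELUQ C → ELUQ (.atLeast n P C)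

/-- Satisfaction of a concept by a constant over a dataset. -/
def sat (D : Dataset δ Col) : ℕ → Concept δ Col → Prop
  | _, .top => True
  | c, .atom A => Fact.unary A c ∈ D
  | c, .and C₁ C₂ => sat D c C₁ ∧ sat D c C₂
  | c, .or C₁ C₂ => sat D c C₁ ∨ sat D c C₂
  | c, .atLeast n P C =>
      ∃ S : Finset ℕ, S.card = n ∧ ∀ d ∈ S, Fact.binary P c d ∈ D ∧ sat D d C

/-- A rule `C ⊑ A`. -/
structure Rule (δ : ℕ) (Col : Type) where
  body : Concept δ Col
  head : Fin δ
deriving DecidableEq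

/-- Immediate consequences of a rule on a dataset. -/
def Rule.T (r : Rule δ Col) (D : Dataset δ Col) : Set (Fact δ Col) :=
  { f | ∃ a : ℕ, f = Fact.unary r.head a ∧ a ∈ conD D ∧ sat D a r.body }

/-- A rule is sound for a GNN if its consequences are always among the GNN's. -/
def Sound (r : Rule δ Col) (M : GNN δ Col) : Prop :=
  ∀ D : Dataset δ Col, r.T D ⊆ M.T D


/-- The dataset `D'_m = D₀ ∪ E ∪ { P(a,c₁),…,P(a,cₙ) } ∪ { P(a,b₁),…,P(a,b_m) }`,
where `bs k` plays the role of `b_{k+1}`. -/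
def Dlim (D₀ E : Dataset δ Col) (P : Col) (a : ℕ) {n : ℕ} (cs : Fin n → ℕ)
    (bs : ℕ → ℕ) (m : ℕ) : Dataset δ Col :=
  D₀ ∪ E ∪ (Finset.univ : Finset (Fin n)).image (fun i => Fact.binary P a (cs i)) ∪
    (Finset.range m).image fun k => Fact.binary P a (bs k)

section AuxLemmas

lemma mem_conD_left {D : Dataset δ Col} {Q : Col} {x d : ℕ}
    (h : Fact.binary Q x d ∈ D) : x ∈ conD D := by
  simp only [conD, Finset.mem_biUnion]
  exact ⟨_, h, by simp⟩

lemma mem_conD_right {D : Dataset δ Col} {Q : Col} {x d : ℕ}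
    (h : Fact.binary Q x d ∈ D) : d ∈ conD D := by
  simp only [conD, Finset.mem_biUnion]
  exact ⟨_, h, by simp⟩

lemma mem_conD_unary {D : Dataset δ Col} {u : Fin δ} {x : ℕ}
    (h : Fact.unary u x ∈ D) : x ∈ conD D := by
  simp only [conD, Finset.mem_biUnion]
  exact ⟨_, h, by simp⟩

lemma mem_nbrs {D : Dataset δ Col} {Q : Col} {x d : ℕ} :
    d ∈ nbrs D Q x ↔ Fact.binary Q x d ∈ D := by
  simp only [nbrs, Finset.mem_filter]
  exact ⟨fun h => h.2, fun h => ⟨mem_conD_right h, h⟩⟩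

lemma mem_Dlim {D₀ E : Dataset δ Col} {P : Col} {a : ℕ} {n : ℕ} {cs : Fin n → ℕ}
    {bs : ℕ → ℕ} {m : ℕ} {f : Fact δ Col} :
    f ∈ Dlim D₀ E P a cs bs m ↔
      f ∈ D₀ ∨ f ∈ E ∨ (∃ i : Fin n, Fact.binary P a (cs i) = f) ∨
        ∃ k, k < m ∧ Fact.binary P a (bs k) = f := by
  simp [Dlim, Finset.mem_union, Finset.mem_image, or_assoc]

/-- The layer-`ℓ` vector of a constant with no facts about it. -/
noncomputable def iso (M : GNN δ Col) : (ℓ : ℕ) → Fin (M.dims ℓ) → ℝ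
  | 0 => fun _ => 0
  | ℓ + 1 => fun i => M.act ℓ (M.bias ℓ i + (M.A ℓ).mulVec (iso M ℓ) i)

lemma val_iso (M : GNN δ Col) {D : Dataset δ Col} {x : ℕ}
    (hu : ∀ i : Fin δ, Fact.unary i x ∉ D)
    (hb : ∀ (Q : Col) (d : ℕ), Fact.binary Q x d ∉ D) :
    ∀ ℓ, M.val D ℓ x = iso M ℓ := by
  intro ℓ
  induction ℓ with
  | zero =>
    funext i
    simp [GNN.val, iso, hu]
  | succ ℓ ih =>
    funext i
    have hn : ∀ Q : Col, nbrs D Q x = ∅ := by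
      intro Q; ext d; simp [mem_nbrs, hb]
    simp [GNN.val, iso, hn, ih, Matrix.mulVec, dotProduct]

lemma tendsto_aux (K w c : ℝ) (hc : 0 ≤ c) :
    Filter.Tendsto (fun m : ℕ => (K + m * w) / (c + m)) Filter.atTop (nhds w) := by
  have h1 : Filter.Tendsto (fun m : ℕ => c + (m : ℝ)) Filter.atTop Filter.atTop :=
    Filter.tendsto_atTop_add_const_left _ _ tendsto_natCast_atTop_atTop
  have h2 : Filter.Tendsto (fun m : ℕ => (K - c * w) / (c + m)) Filter.atTop (nhds 0) :=
    Filter.Tendsto.div_atTop tendsto_const_nhds h1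
  have h3 := h2.const_add w
  rw [add_zero] at h3
  apply h3.congr'
  filter_upwards [Filter.eventually_ge_atTop 1] with m hm
  have hm1 : (1 : ℝ) ≤ (m : ℝ) := by exact_mod_cast hm
  have hcm : c + (m : ℝ) ≠ 0 := by nlinarith
  field_simp
  ring

end AuxLemmas

/-- Let `M` be a MAGNN (with continuous activations), `P` a
binary predicate, `D₀` a dataset with `a ∈ con(D₀)` and no `P`-successor of `a`,
`E` a dataset with `con(E) ∩ con(D₀) = ∅` and `a ∉ con(E)`, `c₁,…,cₙ ∈ con(E)`,
and `b, b₁, b₂, …` pairwise distinct constants occurring in neither `con(D₀)` nor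
`con(E)` and distinct from `a`.  With
`D'_m = D₀ ∪ E ∪ {P(a,c₁),…,P(a,cₙ)} ∪ {P(a,b₁),…,P(a,b_m)}`, for every layer
`ℓ ∈ {0,…,L}` and component `i`,
`v^a_ℓ(D'_m)[i] → v^a_ℓ(D₀ ∪ {P(a,b)})[i]` as `m → ∞`. -/
theorem tendsto_val_fresh (M : GNN δ Col) (hM : M.Monotonic) (P : Col)
    (D₀ E : Dataset δ Col) (a : ℕ) (ha : a ∈ conD D₀)
    (haP : ∀ d : ℕ, Fact.binary P a d ∉ D₀)
    (hdisj : Disjoint (conD E) (conD D₀)) (haE : a ∉ conD E)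
    (n : ℕ) (cs : Fin n → ℕ) (hcs : ∀ i, cs i ∈ conD E)
    (b : ℕ) (bs : ℕ → ℕ) (hinj : Function.Injective bs) (hbb : ∀ k, bs k ≠ b)
    (hfresh : ∀ x ∈ insert b (Set.range bs),
      x ∉ conD D₀ ∧ x ∉ conD E ∧ x ≠ a)
    (ℓ : ℕ) (hℓ : ℓ ≤ M.L) (i : Fin (M.dims ℓ)) :
    Filter.Tendsto (fun m => M.val (Dlim D₀ E P a cs bs m) ℓ a i)
      Filter.atTop
      (nhds (M.val (D₀ ∪ {Fact.binary P a b}) ℓ a i)) := by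
  classical
  have hfb : ∀ k, bs k ∉ conD D₀ ∧ bs k ∉ conD E ∧ bs k ≠ a :=
    fun k => hfresh _ (Set.mem_insert_iff.mpr (Or.inr ⟨k, rfl⟩))
  have hbfr : b ∉ conD D₀ ∧ b ∉ conD E ∧ b ≠ a := hfresh b (Set.mem_insert _ _)
  have hED : ∀ x, x ∈ conD E → x ∉ conD D₀ := fun x hx => Finset.disjoint_left.mp hdisj hx
  -- Claim: vectors of constants of `E` do not depend on `m`.
  have hE2 : ∀ ℓ' e, e ∈ conD E → ∀ m,
      M.val (Dlim D₀ E P a cs bs m) ℓ' e = M.val (Dlim D₀ E P a cs bs 0) ℓ' e := by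
    intro ℓ'
    induction ℓ' with
    | zero =>
      intro e he m
      funext j
      have h : (Fact.unary (Fin.cast M.dims0 j) e ∈ Dlim D₀ E P a cs bs m) ↔
          (Fact.unary (Fin.cast M.dims0 j) e ∈ Dlim D₀ E P a cs bs 0) := by
        simp [mem_Dlim]
      simp only [GNN.val]
      exact if_congr h rfl rfl
    | succ ℓ' ih =>
      intro e he m
      have hea : e ≠ a := fun h => haE (h ▸ he)
      have hnb : ∀ Q, nbrs (Dlim D₀ E P a cs bs m) Q e = nbrs (Dlim D₀ E P a cs bs 0) Q e := by
        intro Q; ext d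
        rw [mem_nbrs, mem_nbrs]
        constructor
        · intro hx
          rcases mem_Dlim.mp hx with h | h | h | h
          · exact mem_Dlim.mpr (Or.inl h)
          · exact mem_Dlim.mpr (Or.inr (Or.inl h))
          · obtain ⟨i0, hi⟩ := h; injection hi with h1 h2 h3; exact absurd h2 (Ne.symm hea)
          · obtain ⟨k, _, hk⟩ := h; injection hk with h1 h2 h3; exact absurd h2 (Ne.symm hea)
        · intro hx
          rcases mem_Dlim.mp hx with h | h | h | h
          · exact mem_Dlim.mpr (Or.inl h)
          · exact mem_Dlim.mpr (Or.inr (Or.inl h))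
          · obtain ⟨i0, hi⟩ := h; injection hi with h1 h2 h3; exact absurd h2 (Ne.symm hea)
          · obtain ⟨k, hk, _⟩ := h; exact absurd hk (Nat.not_lt_zero k)
      have hmemE : ∀ Q d, d ∈ nbrs (Dlim D₀ E P a cs bs 0) Q e → d ∈ conD E := by
        intro Q d hd
        rw [mem_nbrs] at hd
        rcases mem_Dlim.mp hd with h | h | h | h
        · exact absurd (mem_conD_left h) (hED e he)
        · exact mem_conD_right h
        · obtain ⟨i0, hi⟩ := h; injection hi with h1 h2 h3; exact absurd h2 (Ne.symm hea)
        · obtain ⟨k, hk, _⟩ := h; exact absurd hk (Nat.not_lt_zero k)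
      have key : ∀ Q : Col,
          (M.B Q ℓ').mulVec (fun j' =>
              (∑ d ∈ nbrs (Dlim D₀ E P a cs bs m) Q e,
                M.val (Dlim D₀ E P a cs bs m) ℓ' d j') /
                ((nbrs (Dlim D₀ E P a cs bs m) Q e).card : ℝ))
            = (M.B Q ℓ').mulVec (fun j' =>
              (∑ d ∈ nbrs (Dlim D₀ E P a cs bs 0) Q e,
                M.val (Dlim D₀ E P a cs bs 0) ℓ' d j') /
                ((nbrs (Dlim D₀ E P a cs bs 0) Q e).card : ℝ)) := by
        intro Q
        rw [hnb Q]
        have hv : (fun j' : Fin (M.dims ℓ') =>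
            (∑ d ∈ nbrs (Dlim D₀ E P a cs bs 0) Q e,
              M.val (Dlim D₀ E P a cs bs m) ℓ' d j') /
              ((nbrs (Dlim D₀ E P a cs bs 0) Q e).card : ℝ))
            = (fun j' : Fin (M.dims ℓ') =>
            (∑ d ∈ nbrs (Dlim D₀ E P a cs bs 0) Q e,
              M.val (Dlim D₀ E P a cs bs 0) ℓ' d j') /
              ((nbrs (Dlim D₀ E P a cs bs 0) Q e).card : ℝ)) := by
          funext j'
          have hsc : (∑ d ∈ nbrs (Dlim D₀ E P a cs bs 0) Q e,
                M.val (Dlim D₀ E P a cs bs m) ℓ' d j')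
              = ∑ d ∈ nbrs (Dlim D₀ E P a cs bs 0) Q e,
                M.val (Dlim D₀ E P a cs bs 0) ℓ' d j' :=
            Finset.sum_congr rfl fun d hd => by rw [ih d (hmemE Q d hd) m]
          rw [hsc]
        rw [hv]
      funext j
      simp only [GNN.val, ih e he m]
      congr 2
      apply Finset.sum_congr rfl
      intro Q _
      rw [key Q]
  -- Claim: the fresh constants `bs k` have the "isolated" vectors.
  have hbs_iso : ∀ m k, ∀ ℓ', M.val (Dlim D₀ E P a cs bs m) ℓ' (bs k) = iso M ℓ' := by
    intro m k
    apply val_iso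
    · intro u hu
      rcases mem_Dlim.mp hu with h | h | h | h
      · exact (hfb k).1 (mem_conD_unary h)
      · exact (hfb k).2.1 (mem_conD_unary h)
      · obtain ⟨i0, hi⟩ := h; exact (by cases hi)
      · obtain ⟨k', _, hk⟩ := h; exact (by cases hk)
    · intro Q d hQ
      rcases mem_Dlim.mp hQ with h | h | h | h
      · exact (hfb k).1 (mem_conD_left h)
      · exact (hfb k).2.1 (mem_conD_left h)
      · obtain ⟨i0, hi⟩ := h; injection hi with h1 h2 h3; exact (hfb k).2.2 h2.symm
      · obtain ⟨k', _, hk⟩ := h; injection hk with h1 h2 h3; exact (hfb k).2.2 h2.symm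
  -- Claim: `b` has the "isolated" vectors in the target dataset.
  have hb_iso : ∀ ℓ', M.val (D₀ ∪ {Fact.binary P a b}) ℓ' b = iso M ℓ' := by
    apply val_iso
    · intro u hu
      rcases Finset.mem_union.mp hu with h | h
      · exact hbfr.1 (mem_conD_unary h)
      · exact (by cases Finset.mem_singleton.mp h)
    · intro Q d hQ
      rcases Finset.mem_union.mp hQ with h | h
      · exact hbfr.1 (mem_conD_left h)
      · have h' := Finset.mem_singleton.mp h
        injection h' with h1 h2 h3
        exact hbfr.2.2 h2
  -- Main claim, by induction on the layer.
  have main : ∀ ℓ' d, d ∈ conD D₀ →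
      ∀ i' : Fin (M.dims ℓ'),
        Filter.Tendsto (fun m => M.val (Dlim D₀ E P a cs bs m) ℓ' d i')
          Filter.atTop (nhds (M.val (D₀ ∪ {Fact.binary P a b}) ℓ' d i')) := by
    intro ℓ'
    induction ℓ' with
    | zero =>
      intro d hd i'
      have h : ∀ m, M.val (Dlim D₀ E P a cs bs m) 0 d i'
          = M.val (D₀ ∪ {Fact.binary P a b}) 0 d i' := by
        intro m
        have hiff : (Fact.unary (Fin.cast M.dims0 i') d ∈ Dlim D₀ E P a cs bs m) ↔
            (Fact.unary (Fin.cast M.dims0 i') d ∈ D₀ ∪ {Fact.binary P a b}) := by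
          constructor
          · intro hu
            rcases mem_Dlim.mp hu with h | h | h | h
            · exact Finset.mem_union_left _ h
            · exact absurd hd (hED d (mem_conD_unary h))
            · obtain ⟨_, hi⟩ := h; exact (by cases hi)
            · obtain ⟨_, _, hk⟩ := h; exact (by cases hk)
          · intro hu
            rcases Finset.mem_union.mp hu with h | h
            · exact mem_Dlim.mpr (Or.inl h)
            · exact (by cases Finset.mem_singleton.mp h)
        simp only [GNN.val]
        exact if_congr hiff rfl rfl
      exact Filter.Tendsto.congr (fun m => (h m).symm) tendsto_const_nhds
    | succ ℓ' ih =>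
      intro d hd i'
      have hdE : d ∉ conD E := Finset.disjoint_right.mp hdisj hd
      have easy_m : ∀ Q : Col, (d = a → Q ≠ P) → ∀ m,
          nbrs (Dlim D₀ E P a cs bs m) Q d = nbrs D₀ Q d := by
        intro Q hQ m
        ext x
        rw [mem_nbrs, mem_nbrs]
        constructor
        · intro hx
          rcases mem_Dlim.mp hx with h | h | h | h
          · exact h
          · exact absurd (mem_conD_left h) hdE
          · obtain ⟨i0, hi⟩ := h; injection hi with h1 h2 h3
            exact absurd h1.symm (hQ h2.symm)
          · obtain ⟨k, _, hk⟩ := h; injection hk with h1 h2 h3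
            exact absurd h1.symm (hQ h2.symm)
        · intro hx; exact mem_Dlim.mpr (Or.inl hx)
      have easy_t : ∀ Q : Col, (d = a → Q ≠ P) →
          nbrs (D₀ ∪ {Fact.binary P a b}) Q d = nbrs D₀ Q d := by
        intro Q hQ
        ext x
        rw [mem_nbrs, mem_nbrs]
        constructor
        · intro hx
          rcases Finset.mem_union.mp hx with h | h
          · exact h
          · have h' := Finset.mem_singleton.mp h
            injection h' with h1 h2 h3
            exact absurd h1 (hQ h2)
        · exact fun h => Finset.mem_union_left _ h
      have hmean : ∀ (Q : Col) (j : Fin (M.dims ℓ')),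
          Filter.Tendsto (fun m =>
            (∑ e ∈ nbrs (Dlim D₀ E P a cs bs m) Q d,
              M.val (Dlim D₀ E P a cs bs m) ℓ' e j) /
              ((nbrs (Dlim D₀ E P a cs bs m) Q d).card : ℝ))
            Filter.atTop
            (nhds ((∑ e ∈ nbrs (D₀ ∪ {Fact.binary P a b}) Q d,
              M.val (D₀ ∪ {Fact.binary P a b}) ℓ' e j) /
              ((nbrs (D₀ ∪ {Fact.binary P a b}) Q d).card : ℝ))) := by
        intro Q j
        by_cases hcase : d = a ∧ Q = P
        · obtain ⟨h1, h2⟩ := hcase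
          subst h1; subst h2
          have hPE : ∀ x, Fact.binary Q d x ∉ E := fun x h => haE (mem_conD_left h)
          have hnbm : ∀ m, nbrs (Dlim D₀ E Q d cs bs m) Q d
              = Finset.image cs Finset.univ ∪ (Finset.range m).image bs := by
            intro m
            ext x
            rw [mem_nbrs]
            simp only [mem_Dlim, Finset.mem_union, Finset.mem_image, Finset.mem_univ,
              Finset.mem_range, true_and]
            constructor
            · rintro (h | h | ⟨i0, hi⟩ | ⟨k, hk, hkeq⟩)
              · exact absurd h (haP x)
              · exact absurd h (hPE x)
              · exact Or.inl ⟨i0, by simpa using hi⟩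
              · exact Or.inr ⟨k, hk, by simpa using hkeq⟩
            · rintro (⟨i0, h3⟩ | ⟨k, hk, h3⟩)
              · exact Or.inr (Or.inr (Or.inl ⟨i0, by rw [h3]⟩))
              · exact Or.inr (Or.inr (Or.inr ⟨k, hk, by rw [h3]⟩))
          have hdisjCB : ∀ m, Disjoint (Finset.image cs Finset.univ)
              ((Finset.range m).image bs) := by
            intro m
            rw [Finset.disjoint_left]
            intro x hx hx'
            obtain ⟨i0, _, rfl⟩ := Finset.mem_image.mp hx
            obtain ⟨k, _, hk⟩ := Finset.mem_image.mp hx'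
            exact (hfb k).2.1 (by rw [hk]; exact hcs i0)
          have hcard : ∀ m, ((nbrs (Dlim D₀ E Q d cs bs m) Q d).card : ℝ)
              = ((Finset.image cs Finset.univ).card : ℝ) + m := by
            intro m
            rw [hnbm m, Finset.card_union_of_disjoint (hdisjCB m),
              Finset.card_image_of_injective _ hinj, Finset.card_range]
            push_cast
            ring
          have hsum : ∀ m, (∑ e ∈ nbrs (Dlim D₀ E Q d cs bs m) Q d,
              M.val (Dlim D₀ E Q d cs bs m) ℓ' e j)
              = (∑ e ∈ Finset.image cs Finset.univ,
                  M.val (Dlim D₀ E Q d cs bs 0) ℓ' e j) + m * iso M ℓ' j := by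
            intro m
            rw [hnbm m, Finset.sum_union (hdisjCB m)]
            congr 1
            · apply Finset.sum_congr rfl
              intro e he
              obtain ⟨i0, _, rfl⟩ := Finset.mem_image.mp he
              rw [hE2 ℓ' (cs i0) (hcs i0) m]
            · have hco : ∀ e ∈ (Finset.range m).image bs,
                  M.val (Dlim D₀ E Q d cs bs m) ℓ' e j = iso M ℓ' j := by
                intro e he
                obtain ⟨k, _, rfl⟩ := Finset.mem_image.mp he
                rw [hbs_iso m k ℓ']
              rw [Finset.sum_congr rfl hco, Finset.sum_const,
                Finset.card_image_of_injective _ hinj, Finset.card_range, nsmul_eq_mul]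
          have hnbt : nbrs (D₀ ∪ {Fact.binary Q d b}) Q d = {b} := by
            ext x
            rw [mem_nbrs, Finset.mem_singleton]
            constructor
            · intro hx
              rcases Finset.mem_union.mp hx with h | h
              · exact absurd h (haP x)
              · simpa using Finset.mem_singleton.mp h
            · rintro rfl
              exact Finset.mem_union_right _ (Finset.mem_singleton_self _)
          have htarget : (∑ e ∈ nbrs (D₀ ∪ {Fact.binary Q d b}) Q d,
              M.val (D₀ ∪ {Fact.binary Q d b}) ℓ' e j) /
              ((nbrs (D₀ ∪ {Fact.binary Q d b}) Q d).card : ℝ) = iso M ℓ' j := by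
            rw [hnbt, Finset.sum_singleton, Finset.card_singleton, hb_iso ℓ']
            simp
          rw [htarget]
          have haux := tendsto_aux
            (∑ e ∈ Finset.image cs Finset.univ, M.val (Dlim D₀ E Q d cs bs 0) ℓ' e j)
            (iso M ℓ' j) ((Finset.image cs Finset.univ).card : ℝ) (Nat.cast_nonneg _)
          exact Filter.Tendsto.congr (fun m => by rw [hsum m, hcard m]) haux
        · have hQ : d = a → Q ≠ P := fun h1 h2 => hcase ⟨h1, h2⟩
          have e1 := easy_m Q hQ
          have e2 := easy_t Q hQ
          rw [e2]
          have hsum : Filter.Tendsto (fun m => ∑ e ∈ nbrs D₀ Q d,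
              M.val (Dlim D₀ E P a cs bs m) ℓ' e j) Filter.atTop
              (nhds (∑ e ∈ nbrs D₀ Q d, M.val (D₀ ∪ {Fact.binary P a b}) ℓ' e j)) := by
            apply tendsto_finset_sum
            intro e he
            exact ih e (mem_conD_right (mem_nbrs.mp he)) j
          exact Filter.Tendsto.congr (fun m => by rw [e1 m])
            (hsum.div_const ((nbrs D₀ Q d).card : ℝ))
      simp only [GNN.val]
      have hA : Filter.Tendsto (fun m => (M.A ℓ').mulVec
          (fun j => M.val (Dlim D₀ E P a cs bs m) ℓ' d j) i') Filter.atTop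
          (nhds ((M.A ℓ').mulVec (fun j => M.val (D₀ ∪ {Fact.binary P a b}) ℓ' d j) i')) := by
        simp only [Matrix.mulVec, dotProduct]
        exact tendsto_finset_sum _ fun j _ => (ih d hd j).const_mul _
      have hB : Filter.Tendsto (fun m => ∑ Q : Col, (M.B Q ℓ').mulVec
          (fun j => (∑ e ∈ nbrs (Dlim D₀ E P a cs bs m) Q d,
            M.val (Dlim D₀ E P a cs bs m) ℓ' e j) /
            ((nbrs (Dlim D₀ E P a cs bs m) Q d).card : ℝ)) i') Filter.atTop
          (nhds (∑ Q : Col, (M.B Q ℓ').mulVec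
          (fun j => (∑ e ∈ nbrs (D₀ ∪ {Fact.binary P a b}) Q d,
            M.val (D₀ ∪ {Fact.binary P a b}) ℓ' e j) /
            ((nbrs (D₀ ∪ {Fact.binary P a b}) Q d).card : ℝ)) i')) := by
        apply tendsto_finset_sum
        intro Q _
        simp only [Matrix.mulVec, dotProduct]
        exact tendsto_finset_sum _ fun j _ => (hmean Q j).const_mul _
      exact Filter.Tendsto.comp ((M.act_cont ℓ').tendsto _)
        ((tendsto_const_nhds.add hA).add hB)
  exact main ℓ a ha i

end KG
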